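/- Fix p ∈ (1,2) and set θ_p = 2/p − 1. There exists a constant C_p > 0 such that for all y = (y₁,y₂) ∈ ℝ²₊, the function φ_y(x) = y₂^{1−θ_p}/(|x−y|·|x−y*|) on ℝ²₊ satisfies ‖φ_y‖_{L^p(ℝ²₊)} ≤ C_p, i.e. the family (φ_y) is uniformly bounded in L^p(ℝ²₊) independently of y. -/

import Mathlib

/-!
The function `φ_y` is dominated by `y₂^{2-2/p} |x - y|⁻¹ (x₂ + y₂)⁻¹`, since the distance from `x`
to the reflected point `y*` is at least `x₂ + y₂`. Integrating the `p`-th power of this bound first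
in `x₁` (scaling `x₁ - y₁ = |x₂ - y₂| t`) and then in `x₂` (scaling `x₂ = y₂ u`) produces
`y₂^{2p-2} · y₂^{2-2p} = 1` times the product of two one-dimensional integrals,
`∫ (1 + t²)^{-p/2} dt` (finite since `p > 1`) and `∫₀^∞ |u - 1|^{1-p} (u + 1)^{-p} du`
(finite since `p < 2` near `u = 1` and `p > 1` at infinity).
-/

open MeasureTheory

/-- The open upper half-plane `ℝ²₊ = {x : x₂ > 0}`. -/
def halfPlane : Set (ℝ × ℝ) := {p | 0 < p.2}

open Set Real
open scoped ENNReal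

theorem setLIntegral_eq_mul_setLIntegral_comp_mul_left (f : ℝ → ℝ≥0∞) {a : ℝ} (ha : a ≠ 0)
    (s : Set ℝ) :
    ∫⁻ x in s, f x = ENNReal.ofReal |a| * ∫⁻ t in (a * ·) ⁻¹' s, f (a * t) := by
  conv_lhs => rw [← Real.smul_map_volume_mul_left ha]
  rw [Measure.restrict_smul, lintegral_smul_measure, smul_eq_mul,
    (measurableEmbedding_mulLeft₀ ha).restrict_map,
    (measurableEmbedding_mulLeft₀ ha).lintegral_map]

theorem lintegral_eq_mul_lintegral_comp_mul_left (f : ℝ → ℝ≥0∞) {a : ℝ} (ha : a ≠ 0) :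
    ∫⁻ x, f x = ENNReal.ofReal |a| * ∫⁻ t, f (a * t) := by
  simpa using setLIntegral_eq_mul_setLIntegral_comp_mul_left f ha univ

theorem eLpNorm_ofReal_eq_lintegral_rpow_inv {α : Type*} [MeasurableSpace α] {μ : Measure α}
    {f : α → ℝ} (hf : 0 ≤ f) {p : ℝ} (hp : 0 < p) :
    eLpNorm f (ENNReal.ofReal p) μ = (∫⁻ x, ENNReal.ofReal (f x ^ p) ∂μ) ^ p⁻¹ := by
  rw [eLpNorm_eq_lintegral_rpow_enorm_toReal (by simpa using hp) ENNReal.ofReal_ne_top,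
    ENNReal.toReal_ofReal hp.le, one_div]
  congr 1
  refine lintegral_congr fun x => ?_
  rw [Real.enorm_eq_ofReal (hf x), ENNReal.ofReal_rpow_of_nonneg (hf x) hp.le]

noncomputable def bracketIntegral (p : ℝ) : ℝ≥0∞ :=
  ∫⁻ t : ℝ, ENNReal.ofReal ((1 + t ^ 2) ^ (-p / 2))

theorem bracketIntegral_lt_top {p : ℝ} (hp : 1 < p) : bracketIntegral p < ∞ := by
  have := (integrable_rpow_neg_one_add_norm_sq (E := ℝ) (μ := volume) (r := p)
    (by simpa using hp)).lintegral_lt_top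
  simpa only [bracketIntegral, norm_eq_abs, sq_abs] using this

theorem lintegral_sub_sq_add_sq_rpow (p c : ℝ) {a : ℝ} (ha : 0 < a) :
    ∫⁻ x : ℝ, ENNReal.ofReal (((x - c) ^ 2 + a ^ 2) ^ (-p / 2))
      = ENNReal.ofReal (a ^ (1 - p)) * bracketIntegral p := by
  have hscale (t : ℝ) : ((a * t) ^ 2 + a ^ 2) ^ (-p / 2) = a ^ (-p) * (1 + t ^ 2) ^ (-p / 2) := by
    rw [show (a * t) ^ 2 + a ^ 2 = a ^ 2 * (1 + t ^ 2) by ring,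
      mul_rpow (by positivity) (by positivity), ← rpow_natCast, ← rpow_mul ha.le]
    ring_nf
  rw [lintegral_sub_right_eq_self (fun x => ENNReal.ofReal ((x ^ 2 + a ^ 2) ^ (-p / 2))) c,
    lintegral_eq_mul_lintegral_comp_mul_left _ ha.ne']
  simp_rw [hscale, ENNReal.ofReal_mul (rpow_nonneg ha.le _)]
  rw [lintegral_const_mul' _ _ ENNReal.ofReal_ne_top, bracketIntegral, ← mul_assoc,
    ← ENNReal.ofReal_mul (abs_nonneg a), abs_of_pos ha, sub_eq_add_neg, rpow_add ha, rpow_one]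

theorem integrableOn_abs_sub_rpow_Icc {r : ℝ} (hr : -1 < r) (c δ : ℝ) :
    IntegrableOn (fun u : ℝ => |u - c| ^ r) (Icc (c - δ) (c + δ)) := by
  have hloc : LocallyIntegrable (fun v : ℝ => |v| ^ r) :=
    locallyIntegrable_of_norm_le_rpow (μ := volume) (α := -r) (C := 1) (by simp)
      (by simp; linarith)
      (Filter.Eventually.of_forall fun v => by
        simp [norm_eq_abs, abs_of_nonneg (rpow_nonneg (abs_nonneg v) r)])
      (Measurable.aestronglyMeasurable (by fun_prop))
  have := ((measurePreserving_sub_right volume c).integrableOn_comp_preimage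
    (measurableEmbedding_subRight c)).2 (hloc.integrableOn_isCompact (isCompact_Icc (a := -δ)
      (b := δ)))
  rwa [preimage_sub_const_Icc, neg_add_eq_sub, add_comm δ] at this

noncomputable def halfLineIntegral (p : ℝ) : ℝ≥0∞ :=
  ∫⁻ u in Ioi 0, ENNReal.ofReal (|u - 1| ^ (1 - p) * (u + 1) ^ (-p))

theorem halfLineIntegral_lt_top {p : ℝ} (hp1 : 1 < p) (hp2 : p < 2) :
    halfLineIntegral p < ∞ := by
  have hmeas : AEStronglyMeasurable (fun u : ℝ => |u - 1| ^ (1 - p) * (u + 1) ^ (-p)) :=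
    Measurable.aestronglyMeasurable (by fun_prop)
  refine IntegrableOn.setLIntegral_lt_top ?_
  rw [← Ioc_union_Ioi_eq_Ioi zero_le_two]
  refine IntegrableOn.union ?_ ?_
  · have hnear := integrableOn_abs_sub_rpow_Icc (r := 1 - p) (by linarith) 1 1
    norm_num at hnear
    refine (hnear.mono_set Ioc_subset_Icc_self).mono' hmeas.restrict <|
      (ae_restrict_iff' measurableSet_Ioc).2 (.of_forall fun u ⟨hu, _⟩ => ?_)
    rw [norm_of_nonneg (by positivity)]
    exact mul_le_of_le_one_right (by positivity)
      (rpow_le_one_of_one_le_of_nonpos (by linarith) (by linarith))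
  · have hfar : IntegrableOn (fun u : ℝ => (u / 2) ^ (1 - 2 * p)) (Ioi 2) := by
      refine IntegrableOn.congr_fun ((integrableOn_Ioi_rpow_of_lt (a := 1 - 2 * p)
        (by linarith) two_pos).div_const ((2 : ℝ) ^ (1 - 2 * p)))
        (fun u (hu : 2 < u) => ?_) measurableSet_Ioi
      rw [div_rpow (by linarith) zero_le_two]
    refine hfar.mono' hmeas.restrict <|
      (ae_restrict_iff' measurableSet_Ioi).2 (.of_forall fun u (hu : 2 < u) => ?_)
    rw [norm_of_nonneg (by positivity), abs_of_pos (by linarith : 0 < u - 1),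
      show 1 - 2 * p = (1 - p) + -p by ring, rpow_add (by positivity)]
    exact mul_le_mul (rpow_le_rpow_of_nonpos (by positivity) (by linarith) (by linarith))
      (rpow_le_rpow_of_nonpos (by positivity) (by linarith) (by linarith)) (by positivity)
      (by positivity)

theorem setLIntegral_Ioi_abs_sub_rpow_mul_add_rpow (p : ℝ) {c : ℝ} (hc : 0 < c) :
    ∫⁻ s in Ioi 0, ENNReal.ofReal (|s - c| ^ (1 - p) * (s + c) ^ (-p))
      = ENNReal.ofReal (c ^ (2 - 2 * p)) * halfLineIntegral p := by
  rw [setLIntegral_eq_mul_setLIntegral_comp_mul_left _ hc.ne', preimage_const_mul_Ioi₀ _ hc,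
    zero_div, halfLineIntegral, ← lintegral_const_mul' _ _ ENNReal.ofReal_ne_top,
    ← lintegral_const_mul' _ _ ENNReal.ofReal_ne_top]
  refine setLIntegral_congr_fun measurableSet_Ioi fun u (hu : 0 < u) => ?_
  rw [← ENNReal.ofReal_mul (by positivity), ← ENNReal.ofReal_mul (by positivity)]
  congr 1
  rw [show c * u - c = c * (u - 1) by ring, show c * u + c = c * (u + 1) by ring, abs_mul,
    abs_of_pos hc, mul_rpow hc.le (abs_nonneg _), mul_rpow hc.le (by positivity),
    show 2 - 2 * p = 1 + (1 - p) + -p by ring, rpow_add hc, rpow_add hc, rpow_one]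
  ac_rfl

theorem halfPlane_eq_univ_prod_Ioi : halfPlane = univ ×ˢ Ioi 0 := by
  ext; simp [halfPlane]

theorem measurableSet_halfPlane : MeasurableSet halfPlane := by
  rw [halfPlane_eq_univ_prod_Ioi]; exact MeasurableSet.univ.prod measurableSet_Ioi

theorem lintegral_halfPlane {f : ℝ × ℝ → ℝ≥0∞} (hf : Measurable f) :
    ∫⁻ x in halfPlane, f x = ∫⁻ x₂ in Ioi 0, ∫⁻ x₁, f (x₁, x₂) := by
  rw [halfPlane_eq_univ_prod_Ioi, Measure.volume_eq_prod,
    setLIntegral_prod_symm f hf.aemeasurable, Measure.restrict_univ]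

/-- `φ_y(x)` for `y = (y₁, y₂)`; the second square root is `|x - y*|`. -/
noncomputable def phi (p y₁ y₂ : ℝ) (x : ℝ × ℝ) : ℝ :=
  y₂ ^ ((1 : ℝ) - (2 / p - 1)) /
    (√((x.1 - y₁) ^ 2 + (x.2 - y₂) ^ 2) * √((x.1 - y₁) ^ 2 + (x.2 + y₂) ^ 2))

theorem phi_nonneg (p y₁ : ℝ) {y₂ : ℝ} (hy : 0 ≤ y₂) : 0 ≤ phi p y₁ y₂ :=
  fun x => by unfold phi; positivity

theorem phi_rpow_le {p : ℝ} (hp : 0 < p) (y₁ : ℝ) {y₂ : ℝ} (hy : 0 < y₂) {x : ℝ × ℝ}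
    (hx : 0 < x.2) :
    phi p y₁ y₂ x ^ p ≤
      y₂ ^ (2 * p - 2) * (((x.1 - y₁) ^ 2 + (x.2 - y₂) ^ 2) ^ (-p / 2) * (x.2 + y₂) ^ (-p)) := by
  have hreflected : x.2 + y₂ ≤ √((x.1 - y₁) ^ 2 + (x.2 + y₂) ^ 2) :=
    le_sqrt_of_sq_le (by nlinarith [sq_nonneg (x.1 - y₁)])
  have hle : phi p y₁ y₂ x ≤
      y₂ ^ ((1 : ℝ) - (2 / p - 1)) / (√((x.1 - y₁) ^ 2 + (x.2 - y₂) ^ 2) * (x.2 + y₂)) := by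
    rcases (sqrt_nonneg ((x.1 - y₁) ^ 2 + (x.2 - y₂) ^ 2)).eq_or_lt with hd | hd
    · simp [phi, ← hd]
    · exact div_le_div_of_nonneg_left (by positivity) (by positivity) (by gcongr)
  refine (rpow_le_rpow (phi_nonneg p y₁ hy.le x) hle hp.le).trans_eq ?_
  rw [div_rpow (by positivity) (by positivity), mul_rpow (by positivity) (by positivity),
    ← rpow_mul hy.le, sqrt_eq_rpow, ← rpow_mul (by positivity), div_eq_mul_inv, mul_inv,
    ← rpow_neg (by positivity), ← rpow_neg (by positivity), one_div_mul_eq_div, ← neg_div,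
    show (1 - (2 / p - 1)) * p = 2 * p - 2 by field_simp; ring]

theorem setLIntegral_halfPlane_rpow_dist_mul_rpow {p : ℝ} (y₁ : ℝ) {y₂ : ℝ} (hy : 0 < y₂) :
    ∫⁻ x in halfPlane,
        ENNReal.ofReal (((x.1 - y₁) ^ 2 + (x.2 - y₂) ^ 2) ^ (-p / 2) * (x.2 + y₂) ^ (-p))
      = ENNReal.ofReal (y₂ ^ (2 - 2 * p)) * halfLineIntegral p * bracketIntegral p := by
  -- On the line `x₂ = y₂` the `x₁`-integral diverges; that line is null.
  have hinner : ∀ᵐ x₂ ∂volume.restrict (Ioi 0),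
      ∫⁻ x₁, ENNReal.ofReal (((x₁ - y₁) ^ 2 + (x₂ - y₂) ^ 2) ^ (-p / 2) * (x₂ + y₂) ^ (-p))
        = ENNReal.ofReal (|x₂ - y₂| ^ (1 - p) * (x₂ + y₂) ^ (-p)) * bracketIntegral p := by
    filter_upwards [ae_restrict_mem measurableSet_Ioi, Measure.ae_ne _ y₂]
      with x₂ (hx₂ : 0 < x₂) hne
    simp_rw [ENNReal.ofReal_mul' (rpow_nonneg (by positivity : 0 ≤ x₂ + y₂) (-p))]
    rw [lintegral_mul_const _ (by fun_prop), ← sq_abs (x₂ - y₂),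
      lintegral_sub_sq_add_sq_rpow p y₁ (abs_pos.2 (sub_ne_zero.2 hne)), mul_right_comm]
  rw [lintegral_halfPlane (by fun_prop), lintegral_congr_ae hinner,
    lintegral_mul_const _ (by fun_prop), setLIntegral_Ioi_abs_sub_rpow_mul_add_rpow p hy]

theorem setLIntegral_halfPlane_phi_rpow_le {p : ℝ} (hp : 0 < p) (y₁ : ℝ) {y₂ : ℝ} (hy : 0 < y₂) :
    ∫⁻ x in halfPlane, ENNReal.ofReal (phi p y₁ y₂ x ^ p)
      ≤ halfLineIntegral p * bracketIntegral p := by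
  calc ∫⁻ x in halfPlane, ENNReal.ofReal (phi p y₁ y₂ x ^ p)
      ≤ ∫⁻ x in halfPlane, ENNReal.ofReal (y₂ ^ (2 * p - 2)) * ENNReal.ofReal
          (((x.1 - y₁) ^ 2 + (x.2 - y₂) ^ 2) ^ (-p / 2) * (x.2 + y₂) ^ (-p)) := by
        refine setLIntegral_mono' measurableSet_halfPlane fun x (hx : 0 < x.2) => ?_
        rw [← ENNReal.ofReal_mul (by positivity)]
        exact ENNReal.ofReal_le_ofReal (phi_rpow_le hp y₁ hy hx)
    _ = halfLineIntegral p * bracketIntegral p := by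
        rw [lintegral_const_mul' _ _ ENNReal.ofReal_ne_top,
          setLIntegral_halfPlane_rpow_dist_mul_rpow y₁ hy, ← mul_assoc, ← mul_assoc,
          ← ENNReal.ofReal_mul (by positivity), ← rpow_add hy]
        norm_num

theorem phi_family_uniformly_Lp (p : ℝ) (hp1 : 1 < p) (hp2 : p < 2) :
    ∃ C > 0, ∀ y₁ y₂ : ℝ, 0 < y₂ →
      eLpNorm (fun x : ℝ × ℝ =>
          y₂ ^ ((1 : ℝ) - (2 / p - 1)) /
            (Real.sqrt ((x.1 - y₁)^2 + (x.2 - y₂)^2)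
              * Real.sqrt ((x.1 - y₁)^2 + (x.2 + y₂)^2)))
        (ENNReal.ofReal p) (volume.restrict halfPlane) ≤ ENNReal.ofReal C := by
  have hp : 0 < p := by linarith
  set M := (halfLineIntegral p * bracketIntegral p) ^ p⁻¹
  have hM : M ≠ ∞ := ENNReal.rpow_ne_top_of_nonneg (by positivity)
    (ENNReal.mul_ne_top (halfLineIntegral_lt_top hp1 hp2).ne (bracketIntegral_lt_top hp1).ne)
  refine ⟨M.toReal + 1, by positivity, fun y₁ y₂ hy => ?_⟩
  change eLpNorm (phi p y₁ y₂) _ _ ≤ _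
  calc eLpNorm (phi p y₁ y₂) (ENNReal.ofReal p) (volume.restrict halfPlane)
      = (∫⁻ x in halfPlane, ENNReal.ofReal (phi p y₁ y₂ x ^ p)) ^ p⁻¹ :=
        eLpNorm_ofReal_eq_lintegral_rpow_inv (phi_nonneg p y₁ hy.le) hp
    _ ≤ M := ENNReal.rpow_le_rpow (setLIntegral_halfPlane_phi_rpow_le hp y₁ hy) (by positivity)
    _ ≤ ENNReal.ofReal (M.toReal + 1) := by
        rw [← ENNReal.ofReal_toReal hM]
        exact ENNReal.ofReal_le_ofReal (by simp)
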